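/- arXiv:math/0008152 — 2 statements merged into one kernel-verified Lean document; each statement's English description precedes it below -/
import Mathlib

section
/- The generating function G_{k,ℓ}(t) counting partitions fitting inside the (k,ℓ)-hook satisfies the recurrence G_{k,ℓ}(t) = G_{k,ℓ-1}(t) + t^{ℓ(k+1)} · G_k(t) · G_ℓ(t), where G_m(t) = ∏_{i=1}^m 1/(1-t^i) is the generating function for partitions with at most m parts. -/
open PowerSeries Finset

/-- A partition fits inside the `(k,ℓ)`-hook iff at most `k` of its parts exceed `ℓ`,
i.e. `λ_{k+i} ≤ ℓ` for all `i ≥ 1`. -/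
def InHook (k l : ℕ) {n : ℕ} (p : Nat.Partition n) : Prop :=
  (p.parts.filter (fun x => l < x)).card ≤ k

/-- `G_{k,ℓ}(t) = ∑_λ t^{|λ|}` over partitions fitting inside the `(k,ℓ)`-hook. -/
noncomputable def hookGF (k l : ℕ) : PowerSeries ℚ :=
  PowerSeries.mk fun n => (Nat.card {p : Nat.Partition n // InHook k l p} : ℚ)

/-- `G_m(t) = ∏_{i=1}^m 1/(1-t^i)`. -/
noncomputable def Gm (m : ℕ) : PowerSeries ℚ :=
  ∏ i ∈ Finset.Icc 1 m, (1 - (PowerSeries.X : PowerSeries ℚ) ^ i)⁻¹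

/-!
A partition in the `(k, ℓ)`-hook but not in the `(k, ℓ - 1)`-hook is one with `λ_{k+1} = ℓ`.
Removing the `(k + 1) × ℓ` rectangle from its first `k + 1` rows leaves the arm
`(λ_i - ℓ)_{i ≤ k}`, a partition with at most `k` parts, and the leg `(λ_i)_{i > k + 1}`, a
partition with parts at most `ℓ`; conversely any such pair glues back, so these partitions have
generating function `t^{ℓ(k+1)} · A(t) · G_ℓ(t)` with `A` counting partitions with at most `k`
parts. Conjugation identifies `A` with `G_k`, and `G_m` counts partitions with parts at most `m`
by Euler's product formula.
-/

open scoped PowerSeries.WithPiTopology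

namespace YoungDiagram

theorem card_eq_sum_rowLens (μ : YoungDiagram) : μ.card = μ.rowLens.sum := by
  rw [YoungDiagram.card, card_eq_sum_card_fiberwise (f := Prod.fst) (t := range (μ.colLen 0))
    fun c hc => mem_range.mpr (mem_iff_lt_colLen.mp (μ.up_left_mem le_rfl c.2.zero_le hc))]
  rw [rowLens, ← Multiset.sum_coe, ← Multiset.map_coe, ← Multiset.range, ← Finset.range_val,
    ← Finset.sum_eq_multiset_sum]
  exact sum_congr rfl fun i _ => (μ.rowLen_eq_card).symm

theorem card_transpose (μ : YoungDiagram) : μ.transpose.card = μ.card :=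
  card_map _

theorem forall_mem_rowLens_le_iff (μ : YoungDiagram) (c : ℕ) :
    (∀ x ∈ μ.rowLens, x ≤ c) ↔ μ.rowLen 0 ≤ c := by
  simp only [rowLens, List.mem_map, List.mem_range, forall_exists_index, and_imp,
    forall_apply_eq_imp_iff₂]
  refine ⟨fun h => ?_, fun h i _ => (μ.rowLen_anti 0 i i.zero_le).trans h⟩
  rcases (μ.colLen 0).eq_zero_or_pos with h0 | h0
  · have : (0, 0) ∉ μ := by rw [mem_iff_lt_colLen, h0]; exact Nat.lt_irrefl 0
    rw [mem_iff_lt_rowLen, not_lt, Nat.le_zero] at this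
    simp [this]
  · exact h 0 h0

end YoungDiagram

namespace Nat.Partition

variable {n : ℕ}

def toYoungDiagram (p : n.Partition) : YoungDiagram :=
  .ofRowLens (p.parts.sort (· ≥ ·)) (p.parts.pairwise_sort _).sortedGE

theorem rowLens_toYoungDiagram (p : n.Partition) :
    p.toYoungDiagram.rowLens = p.parts.sort (· ≥ ·) :=
  YoungDiagram.rowLens_ofRowLens_eq_self fun _ hx => p.parts_pos ((Multiset.mem_sort _).mp hx)

theorem coe_rowLens_toYoungDiagram (p : n.Partition) :
    (p.toYoungDiagram.rowLens : Multiset ℕ) = p.parts := by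
  rw [rowLens_toYoungDiagram, Multiset.sort_eq]

def conj (p : n.Partition) : n.Partition where
  parts := p.toYoungDiagram.transpose.rowLens
  parts_pos hx := p.toYoungDiagram.transpose.pos_of_mem_rowLens _ hx
  parts_sum := by
    rw [Multiset.sum_coe, ← YoungDiagram.card_eq_sum_rowLens, YoungDiagram.card_transpose,
      YoungDiagram.card_eq_sum_rowLens, ← Multiset.sum_coe, coe_rowLens_toYoungDiagram,
      p.parts_sum]

theorem toYoungDiagram_conj (p : n.Partition) :
    p.conj.toYoungDiagram = p.toYoungDiagram.transpose := by
  have : p.conj.parts.sort (· ≥ ·) = p.toYoungDiagram.transpose.rowLens :=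
    List.Perm.eq_of_pairwise' (Multiset.pairwise_sort _ _) (YoungDiagram.rowLens_sorted _).pairwise
      (by rw [← Multiset.coe_eq_coe, Multiset.sort_eq]; rfl)
  simp only [toYoungDiagram, this]
  exact YoungDiagram.ofRowLens_to_rowLens_eq_self

theorem conj_conj (p : n.Partition) : p.conj.conj = p :=
  Nat.Partition.ext <| by
    change (p.conj.toYoungDiagram.transpose.rowLens : Multiset ℕ) = p.parts
    rw [toYoungDiagram_conj, YoungDiagram.transpose_transpose, coe_rowLens_toYoungDiagram]

theorem card_parts_conj (p : n.Partition) :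
    Multiset.card p.conj.parts = p.toYoungDiagram.rowLen 0 := by
  simp [conj, YoungDiagram.colLen_transpose]

theorem forall_mem_parts_le_iff (p : n.Partition) (c : ℕ) :
    (∀ x ∈ p.parts, x ≤ c) ↔ p.toYoungDiagram.rowLen 0 ≤ c := by
  rw [← YoungDiagram.forall_mem_rowLens_le_iff, ← coe_rowLens_toYoungDiagram]
  rfl

theorem card_parts_conj_le_iff (p : n.Partition) (c : ℕ) :
    Multiset.card p.conj.parts ≤ c ↔ ∀ x ∈ p.parts, x ≤ c := by
  rw [card_parts_conj, forall_mem_parts_le_iff]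

theorem card_filter_card_parts_le (n c : ℕ) :
    #{p : n.Partition | Multiset.card p.parts ≤ c} = #(restricted n (· ≤ c)) := by
  refine card_nbij' conj conj (fun p hp => ?_) (fun p hp => ?_) (fun p _ => conj_conj p)
    (fun p _ => conj_conj p)
  · simp only [restricted, mem_coe, mem_filter, mem_univ, true_and] at hp ⊢
    rwa [← card_parts_conj_le_iff, conj_conj]
  · simp only [restricted, mem_coe, mem_filter, mem_univ, true_and] at hp ⊢
    rwa [card_parts_conj_le_iff]

end Nat.Partition

theorem PowerSeries.inv_one_sub_X_pow_eq_tsum {K : Type*} [Field K] [TopologicalSpace K]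
    [IsTopologicalRing K] [T2Space K] {i : ℕ} (hi : i ≠ 0) :
    (1 - X ^ i : K⟦X⟧)⁻¹ = ∑' j, X ^ (i * j) := by
  rw [PowerSeries.inv_eq_iff_mul_eq_one (by simp [zero_pow hi])]
  simp_rw [pow_mul]
  exact WithPiTopology.tsum_pow_mul_one_sub_of_constantCoeff_eq_zero (by simp [zero_pow hi])

theorem mk_card_restricted_le_eq_Gm (m : ℕ) :
    PowerSeries.mk (fun n => (#(Nat.Partition.restricted n (· ≤ m)) : ℚ)) = Gm m := by
  rw [Nat.Partition.powerSeriesMk_card_restricted_eq_tprod,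
    tprod_eq_prod (s := range m) fun i hi => if_neg (by simpa using hi), Gm,
    ← Ico_add_one_right_eq_Icc, ← zero_add 1, ← Finset.prod_Ico_add', Nat.Ico_zero_eq_range]
  refine prod_congr rfl fun i hi => ?_
  rw [if_pos (by simpa using hi), zero_add, PowerSeries.inv_one_sub_X_pow_eq_tsum i.succ_ne_zero]

theorem mk_card_card_parts_le_eq_Gm (m : ℕ) :
    PowerSeries.mk (fun n => (#{p : n.Partition | Multiset.card p.parts ≤ m} : ℚ)) = Gm m := by
  simp_rw [Nat.Partition.card_filter_card_parts_le]
  exact mk_card_restricted_le_eq_Gm m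

namespace Multiset

variable (k l : ℕ) {q r s : Multiset ℕ}

def hookArm (s : Multiset ℕ) : Multiset ℕ := (s.filter (l < ·)).map (· - l)

-- The first `k + 1` rows of `s` are its parts above `l` and `k + 1 - #{x ∈ s | l < x}` copies
-- of `l`.
def hookLeg (s : Multiset ℕ) : Multiset ℕ :=
  s.filter (· ≤ l) - replicate (k + 1 - card (s.filter (l < ·))) l

def hookJoin (q r : Multiset ℕ) : Multiset ℕ :=
  q.map (· + l) + replicate (k + 1 - card q) l + r

variable {k l}

theorem card_hookArm : card (hookArm l s) = card (s.filter (l < ·)) :=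
  card_map _ _

theorem pos_of_mem_hookArm {x : ℕ} (hx : x ∈ hookArm l s) : 0 < x := by
  obtain ⟨y, hy, rfl⟩ := mem_map.mp hx
  exact Nat.sub_pos_of_lt (of_mem_filter hy)

theorem hookLeg_le : hookLeg k l s ≤ s.filter (· ≤ l) :=
  tsub_le_self

theorem mem_of_mem_hookLeg {x : ℕ} (hx : x ∈ hookLeg k l s) : x ∈ s :=
  mem_of_mem_filter (mem_of_le hookLeg_le hx)

theorem le_of_mem_hookLeg {x : ℕ} (hx : x ∈ hookLeg k l s) : x ≤ l :=
  (mem_filter.mp (mem_of_le hookLeg_le hx)).2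

theorem filter_lt_hookJoin (hq : ∀ x ∈ q, 0 < x) (hr : ∀ x ∈ r, x ≤ l) :
    (hookJoin k l q r).filter (l < ·) = q.map (· + l) := by
  rw [hookJoin, filter_add, filter_add, filter_eq_self.mpr, filter_eq_nil.mpr, filter_eq_nil.mpr,
    add_zero, add_zero]
  · exact fun x hx => (hr x hx).not_gt
  · exact fun x hx => by rw [eq_of_mem_replicate hx]; exact lt_irrefl l
  · simp only [mem_map, forall_exists_index, and_imp, forall_apply_eq_imp_iff₂]
    exact fun x hx => Nat.lt_add_of_pos_left (hq x hx)

theorem filter_le_hookJoin (hq : ∀ x ∈ q, 0 < x) (hr : ∀ x ∈ r, x ≤ l) :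
    (hookJoin k l q r).filter (· ≤ l) = replicate (k + 1 - card q) l + r := by
  rw [hookJoin, filter_add, filter_add, filter_eq_nil.mpr, filter_eq_self.mpr, filter_eq_self.mpr,
    zero_add]
  · exact hr
  · exact fun x hx => (eq_of_mem_replicate hx).le
  · simp only [mem_map, forall_exists_index, and_imp, forall_apply_eq_imp_iff₂, not_le]
    exact fun x hx => Nat.lt_add_of_pos_left (hq x hx)

theorem hookArm_hookJoin (hq : ∀ x ∈ q, 0 < x) (hr : ∀ x ∈ r, x ≤ l) :
    hookArm l (hookJoin k l q r) = q := by
  simp only [hookArm, filter_lt_hookJoin hq hr, map_map, Function.comp_def, Nat.add_sub_cancel,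
    map_id']

theorem hookLeg_hookJoin (hq : ∀ x ∈ q, 0 < x) (hr : ∀ x ∈ r, x ≤ l) :
    hookLeg k l (hookJoin k l q r) = r := by
  rw [hookLeg, filter_le_hookJoin hq hr, filter_lt_hookJoin hq hr, card_map,
    add_tsub_cancel_left]

theorem card_filter_lt_hookJoin (hq : ∀ x ∈ q, 0 < x) (hr : ∀ x ∈ r, x ≤ l) :
    card ((hookJoin k l q r).filter (l < ·)) = card q := by
  rw [filter_lt_hookJoin hq hr, card_map]

theorem lt_card_filter_le_hookJoin (hq : card q ≤ k) :
    k < card ((hookJoin k l q r).filter (l ≤ ·)) := by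
  rw [hookJoin, filter_add, filter_add, filter_eq_self.mpr, filter_eq_self.mpr, card_add, card_add,
    card_map, card_replicate]
  · omega
  · exact fun x hx => (eq_of_mem_replicate hx).ge
  · simp

theorem pos_of_mem_hookJoin (hl : 0 < l) (hr : ∀ x ∈ r, 0 < x) {x : ℕ}
    (hx : x ∈ hookJoin k l q r) : 0 < x := by
  simp only [hookJoin, mem_add, mem_map, mem_replicate] at hx
  rcases hx with (⟨y, -, rfl⟩ | ⟨-, rfl⟩) | hx
  exacts [Nat.add_pos_right _ hl, hl, hr x hx]

theorem sum_hookJoin (hq : card q ≤ k + 1) :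
    (hookJoin k l q r).sum = q.sum + r.sum + l * (k + 1) := by
  rw [hookJoin, sum_add, sum_add, sum_map_add, map_const', sum_replicate, sum_replicate,
    smul_eq_mul, smul_eq_mul, map_id', add_assoc q.sum, ← add_mul, Nat.add_sub_cancel' hq]
  ring

theorem filter_lt_add_filter_le (l : ℕ) (s : Multiset ℕ) :
    s.filter (l < ·) + s.filter (· ≤ l) = s := by
  rw [filter_congr (q := fun x => ¬l < x) fun x _ => not_lt.symm, filter_add_not]

theorem replicate_le_filter_le (h : k < card (s.filter (l ≤ ·))) :
    replicate (k + 1 - card (s.filter (l < ·))) l ≤ s.filter (· ≤ l) := by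
  rw [← le_count_iff_replicate_le, count_filter_of_pos (p := (· ≤ l)) le_rfl,
    count_eq_card_filter_eq]
  have := congrArg card (filter_add_filter (l < ·) (l = ·) s)
  rw [filter_congr (q := (l ≤ ·)) fun x _ => le_iff_lt_or_eq.symm,
    (filter_eq_nil (p := fun x => l < x ∧ l = x)).mpr fun x _ => by omega, card_add,
    card_add] at this
  simp only [card_zero] at this
  omega

theorem hookJoin_hookArm_hookLeg (h : k < card (s.filter (l ≤ ·))) :
    hookJoin k l (hookArm l s) (hookLeg k l s) = s := by
  have harm : (hookArm l s).map (· + l) = s.filter (l < ·) := by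
    simp only [hookArm, map_map, Function.comp_def]
    exact (map_congr rfl fun x hx => Nat.sub_add_cancel (of_mem_filter hx).le).trans (map_id' _)
  rw [hookJoin, harm, hookArm, card_map, add_assoc, hookLeg,
    add_tsub_cancel_of_le (replicate_le_filter_le h), filter_lt_add_filter_le]

theorem sum_hookArm_add_sum_hookLeg (h₁ : card (s.filter (l < ·)) ≤ k)
    (h₂ : k < card (s.filter (l ≤ ·))) :
    (hookArm l s).sum + (hookLeg k l s).sum + l * (k + 1) = s.sum := by
  conv_rhs => rw [← hookJoin_hookArm_hookLeg h₂]
  rw [sum_hookJoin (card_hookArm.trans_le (h₁.trans k.le_succ))]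

end Multiset

section HookCorner

open Multiset

instance (k l n : ℕ) : DecidablePred (InHook k l (n := n)) :=
  fun _ => inferInstanceAs (Decidable (_ ≤ k))

variable {k l n : ℕ}

theorem InHook.mono {l' : ℕ} {p : n.Partition} (hl : l' ≤ l) (h : InHook k l' p) :
    InHook k l p :=
  (card_le_card (monotone_filter_right _ fun _ hx => hl.trans_lt hx)).trans h

theorem not_inHook_sub_one_iff (hl : 0 < l) {p : n.Partition} :
    ¬InHook k (l - 1) p ↔ k < card (p.parts.filter (l ≤ ·)) := by
  rw [InHook, not_le, Multiset.filter_congr fun x _ => (by omega : l - 1 < x ↔ l ≤ x)]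

-- `λ_{k+1} = l`: at most `k` parts exceed `l`, but at least `k + 1` parts are `≥ l`.
def hookCorner (k l n : ℕ) : Finset n.Partition :=
  {p | InHook k l p ∧ ¬InHook k (l - 1) p}

theorem sum_hookArm_add_sum_hookLeg_of_inHook (hl : 0 < l) {p : n.Partition}
    (h₁ : InHook k l p) (h₂ : ¬InHook k (l - 1) p) :
    (hookArm l p.parts).sum + (hookLeg k l p.parts).sum + l * (k + 1) = n := by
  rw [sum_hookArm_add_sum_hookLeg h₁ ((not_inHook_sub_one_iff hl).mp h₂), p.parts_sum]

def hookCornerFiberEquiv (hl : 0 < l) (ab : ℕ × ℕ) (hab : ab.1 + ab.2 + l * (k + 1) = n) :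
    {p : n.Partition // (InHook k l p ∧ k < card (p.parts.filter (l ≤ ·))) ∧
        ((hookArm l p.parts).sum, (hookLeg k l p.parts).sum) = ab} ≃
      {q : ab.1.Partition // card q.parts ≤ k} ×
        {r : ab.2.Partition // ∀ x ∈ r.parts, x ≤ l} where
  toFun p :=
    (⟨⟨hookArm l p.1.parts, pos_of_mem_hookArm, congrArg Prod.fst p.2.2⟩,
        card_hookArm.trans_le p.2.1.1⟩,
      ⟨⟨hookLeg k l p.1.parts, fun hx => p.1.parts_pos (mem_of_mem_hookLeg hx),
        congrArg Prod.snd p.2.2⟩, fun _ => le_of_mem_hookLeg⟩)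
  invFun qr :=
    have hq : ∀ x ∈ qr.1.1.parts, 0 < x := fun _ => qr.1.1.parts_pos
    have hr : ∀ x ∈ qr.2.1.parts, x ≤ l := qr.2.2
    ⟨⟨hookJoin k l qr.1.1.parts qr.2.1.parts,
        pos_of_mem_hookJoin hl fun _ => qr.2.1.parts_pos, by
        rw [sum_hookJoin (qr.1.2.trans k.le_succ), qr.1.1.parts_sum, qr.2.1.parts_sum, hab]⟩,
      ⟨(card_filter_lt_hookJoin hq hr).trans_le qr.1.2, lt_card_filter_le_hookJoin qr.1.2⟩, by
        rw [hookArm_hookJoin hq hr, hookLeg_hookJoin hq hr, qr.1.1.parts_sum, qr.2.1.parts_sum]⟩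
  left_inv p := Subtype.ext <| Nat.Partition.ext <| hookJoin_hookArm_hookLeg p.2.1.2
  right_inv qr := Prod.ext
    (Subtype.ext <| Nat.Partition.ext <| hookArm_hookJoin (fun _ => qr.1.1.parts_pos) qr.2.2)
    (Subtype.ext <| Nat.Partition.ext <| hookLeg_hookJoin (fun _ => qr.1.1.parts_pos) qr.2.2)

theorem card_hookCorner_eq_sum (hl : 0 < l) (hn : l * (k + 1) ≤ n) :
    #(hookCorner k l n) =
      ∑ ab ∈ antidiagonal (n - l * (k + 1)),
        #{q : ab.1.Partition | card q.parts ≤ k} *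
          #(Nat.Partition.restricted ab.2 (· ≤ l)) := by
  rw [hookCorner, card_eq_sum_card_fiberwise (t := antidiagonal (n - l * (k + 1)))
    (f := fun p => ((hookArm l p.parts).sum, (hookLeg k l p.parts).sum)) fun p hp => ?_]
  · refine sum_congr rfl fun ab hab => ?_
    rw [Finset.HasAntidiagonal.mem_antidiagonal] at hab
    rw [Finset.filter_filter, ← Fintype.card_subtype]
    simp_rw [not_inHook_sub_one_iff hl]
    rw [Fintype.card_congr (hookCornerFiberEquiv hl ab (by omega)), Fintype.card_prod,
      Fintype.card_subtype, Fintype.card_subtype]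
    rfl
  · rw [Finset.mem_coe, Finset.mem_filter] at hp
    have := sum_hookArm_add_sum_hookLeg_of_inHook hl hp.2.1 hp.2.2
    rw [Finset.mem_coe, Finset.HasAntidiagonal.mem_antidiagonal]
    dsimp only
    omega

end HookCorner

theorem hookGF_eq_hookGF_add {k l l' : ℕ} (hl : l' ≤ l) :
    hookGF k l = hookGF k l' +
      PowerSeries.mk fun n => (#{p : n.Partition | InHook k l p ∧ ¬InHook k l' p} : ℚ) := by
  ext n
  simp only [hookGF, map_add, coeff_mk, Nat.card_eq_fintype_card, Fintype.card_subtype]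
  rw [← card_filter_add_card_filter_not (s := {p : n.Partition | InHook k l p}) (InHook k l'),
    filter_filter, filter_filter, Nat.cast_add]
  congr 2
  exact congrArg card (filter_congr fun p _ => ⟨And.right, fun h => ⟨InHook.mono hl h, h⟩⟩)

theorem mk_card_hookCorner {k l : ℕ} (hl : 0 < l) :
    PowerSeries.mk (fun n => (#(hookCorner k l n) : ℚ)) =
      X ^ (l * (k + 1)) * Gm k * Gm l := by
  rw [← mk_card_card_parts_le_eq_Gm, ← mk_card_restricted_le_eq_Gm]
  ext n
  rw [mul_assoc, coeff_X_pow_mul', coeff_mk]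
  split_ifs with hn
  · simp [coeff_mul, card_hookCorner_eq_sum hl hn]
  · rw [Nat.cast_eq_zero, hookCorner, card_eq_zero, filter_eq_empty_iff]
    intro p _ hp
    have := sum_hookArm_add_sum_hookLeg_of_inHook hl hp.1 hp.2
    omega

theorem stmt4 (k l : ℕ) (hl : 1 ≤ l) :
    hookGF k l
      = hookGF k (l - 1)
        + (PowerSeries.X : PowerSeries ℚ) ^ (l * (k + 1)) * Gm k * Gm l := by
  rw [hookGF_eq_hookGF_add (Nat.sub_le l 1)]
  exact congrArg (hookGF k (l - 1) + ·) (mk_card_hookCorner hl)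
end

section
/- Define A^{k,ℓ}(t) = 1 + ∑_{i=1}^{ℓ} t^{i(k+ℓ+1)} [k choose i]_t ∑_{j=0}^{ℓ-i} t^{j(k-i+1)} [(i+j-1) choose j]_t. Then A^{k,ℓ}(t) satisfies the recurrence A^{k,ℓ}(t) = (1 - t^{k+ℓ}) A^{k,ℓ-1}(t) + t^{ℓ(k+1)} [(k+ℓ) choose ℓ]_t for ℓ ≥ 1, with A^{k,0}(t) = 1. -/
open PowerSeries Finset

/-- The `t`-Pochhammer symbol `(t;t)_n = ∏_{j=0}^{n-1} (1 - t·t^j)`. -/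
noncomputable def qPoch (n : ℕ) : PowerSeries ℚ :=
  ∏ j ∈ Finset.range n, (1 - (PowerSeries.X : PowerSeries ℚ) ^ (j + 1))

/-- The Gaussian binomial coefficient `[a choose b]_t = (t;t)_a / ((t;t)_b (t;t)_{a-b})`,
with the convention that it is `0` when `b > a`. -/
noncomputable def gaussBinom (a b : ℕ) : PowerSeries ℚ :=
  if b ≤ a then qPoch a * (qPoch b)⁻¹ * (qPoch (a - b))⁻¹ else 0

/-- `A^{k,ℓ}(t) = 1 + ∑_{i=1}^{ℓ} t^{i(k+ℓ+1)} [k choose i]_t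
∑_{j=0}^{ℓ-i} t^{j(k-i+1)} [(i+j-1) choose j]_t`. -/
noncomputable def A (k l : ℕ) : PowerSeries ℚ :=
  1 + ∑ i ∈ Finset.Icc 1 l,
    (PowerSeries.X : PowerSeries ℚ) ^ (i * (k + l + 1)) * gaussBinom k i *
      ∑ j ∈ Finset.range (l - i + 1),
        (PowerSeries.X : PowerSeries ℚ) ^ (j * (k - i + 1)) * gaussBinom (i + j - 1) j

/-!
Reindexing by `n = i + j - 1` writes `A^{k,ℓ} - 1` as `∑_{n<ℓ} t^{(n+1)(k+1)} P_n(ℓ-1-n)`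
with `P_n = vandSumPred k n`. The two Pascal rules and the absorption identity
`t^i (1 - t^{i+1}) [k, i+1] = (t^i - t^k) [k, i]` tie `P_n` to the sums `R_n = vandSum k n`,
and turn the `n`-th term of `A^{k,ℓ} - (1 - t^{k+ℓ}) A^{k,ℓ-1}` into
`t^{k+ℓ} (t^{(n+1)k} R_{n+1}(ℓ-1-n) - t^{nk} R_n(ℓ-n))`. The sum telescopes, leaving
`t^{ℓ(k+1)} (P_{ℓ-1}(0) + R_{ℓ-1}(1)) = t^{ℓ(k+1)} R_ℓ(0)`, and `R_ℓ(0) = [k+ℓ, ℓ]_t` is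
the q-Vandermonde identity.
-/

theorem qPoch_succ (n : ℕ) : qPoch (n + 1) = qPoch n * (1 - X ^ (n + 1)) :=
  prod_range_succ _ _

theorem constantCoeff_qPoch (n : ℕ) : constantCoeff (qPoch n) = 1 := by
  simp [qPoch]

theorem qPoch_ne_zero (n : ℕ) : qPoch n ≠ 0 := fun h => by
  simpa [h] using constantCoeff_qPoch n

theorem gaussBinom_mul_qPoch_mul_qPoch {a b c : ℕ} (h : a = b + c) :
    gaussBinom a b * (qPoch b * qPoch c) = qPoch a := by
  have hb := PowerSeries.mul_inv_cancel (qPoch b) (by simp [constantCoeff_qPoch])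
  have hc := PowerSeries.mul_inv_cancel (qPoch c) (by simp [constantCoeff_qPoch])
  rw [gaussBinom, if_pos (by omega), show a - b = c by omega]
  linear_combination qPoch a * (qPoch c * (qPoch c)⁻¹) * hb + qPoch a * hc

theorem gaussBinom_of_lt {a b : ℕ} (h : a < b) : gaussBinom a b = 0 :=
  if_neg (by omega)

theorem gaussBinom_zero_right (a : ℕ) : gaussBinom a 0 = 1 :=
  mul_right_cancel₀ (qPoch_ne_zero a) <| by
    simpa [qPoch] using gaussBinom_mul_qPoch_mul_qPoch (b := 0) (zero_add a).symm

theorem gaussBinom_self (a : ℕ) : gaussBinom a a = 1 :=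
  mul_right_cancel₀ (qPoch_ne_zero a) <| by
    simpa [qPoch] using gaussBinom_mul_qPoch_mul_qPoch (c := 0) (add_zero a).symm

theorem gaussBinom_symm {a b c : ℕ} (h : a = b + c) : gaussBinom a b = gaussBinom a c :=
  mul_right_cancel₀ (mul_ne_zero (qPoch_ne_zero b) (qPoch_ne_zero c)) <| by
    rw [gaussBinom_mul_qPoch_mul_qPoch h, mul_comm (qPoch b),
      gaussBinom_mul_qPoch_mul_qPoch (h.trans (add_comm b c))]

theorem gaussBinom_succ_succ (a b : ℕ) :
    gaussBinom (a + 1) (b + 1) = X ^ (b + 1) * gaussBinom a (b + 1) + gaussBinom a b := by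
  rcases lt_trichotomy a b with h | rfl | h
  · simp [gaussBinom_of_lt h, gaussBinom_of_lt (by omega : a < b + 1),
      gaussBinom_of_lt (by omega : a + 1 < b + 1)]
  · simp [gaussBinom_self, gaussBinom_of_lt]
  · obtain ⟨c, rfl⟩ := Nat.exists_eq_add_of_lt h
    have h₁ :=
      gaussBinom_mul_qPoch_mul_qPoch (a := b + c + 1 + 1) (b := b + 1) (c := c + 1) (by ring)
    have h₂ := gaussBinom_mul_qPoch_mul_qPoch (a := b + c + 1) (b := b + 1) (c := c) (by ring)
    have h₃ := gaussBinom_mul_qPoch_mul_qPoch (a := b + c + 1) (b := b) (c := c + 1) (by ring)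
    apply mul_right_cancel₀ (mul_ne_zero (qPoch_ne_zero (b + 1)) (qPoch_ne_zero (c + 1)))
    rw [qPoch_succ b, qPoch_succ c, qPoch_succ (b + c + 1)] at *
    linear_combination h₁ - X ^ (b + 1) * (1 - X ^ (c + 1)) * h₂ - (1 - X ^ (b + 1)) * h₃

theorem X_pow_mul_one_sub_mul_gaussBinom_succ (a b : ℕ) :
    X ^ b * (1 - X ^ (b + 1)) * gaussBinom a (b + 1) = (X ^ b - X ^ a) * gaussBinom a b := by
  rcases lt_trichotomy a b with h | rfl | h
  · simp [gaussBinom_of_lt h, gaussBinom_of_lt (by omega : a < b + 1)]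
  · simp [gaussBinom_of_lt]
  · obtain ⟨c, rfl⟩ := Nat.exists_eq_add_of_lt h
    have h₁ := gaussBinom_mul_qPoch_mul_qPoch (a := b + c + 1) (b := b + 1) (c := c) (by ring)
    have h₂ := gaussBinom_mul_qPoch_mul_qPoch (a := b + c + 1) (b := b) (c := c + 1) (by ring)
    apply mul_right_cancel₀ (mul_ne_zero (qPoch_ne_zero b) (qPoch_ne_zero (c + 1)))
    rw [qPoch_succ b, qPoch_succ c] at *
    linear_combination X ^ b * (1 - X ^ (c + 1)) * h₁ - (X ^ b - X ^ (b + c + 1)) * h₂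

theorem X_pow_mul_gaussBinom_succ_succ (a b : ℕ) :
    X ^ b * gaussBinom (a + 1) (b + 1) = X ^ b * gaussBinom a (b + 1) + X ^ a * gaussBinom a b := by
  linear_combination X ^ b * gaussBinom_succ_succ a b - X_pow_mul_one_sub_mul_gaussBinom_succ a b

theorem gaussBinom_add_eq_sum (a b d : ℕ) :
    gaussBinom (a + b) (a + d) =
      ∑ i ∈ range (a + 1), X ^ (i * (i + d)) * gaussBinom b (i + d) * gaussBinom a i := by
  induction a generalizing d with
  | zero => simp [gaussBinom_self]
  | succ a ih =>
    have split (i : ℕ) :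
        X ^ ((i + 1) * (i + 1 + d)) * gaussBinom b (i + 1 + d) * gaussBinom (a + 1) (i + 1) =
          X ^ ((i + 1) * (i + 1 + d)) * gaussBinom b (i + 1 + d) * gaussBinom a (i + 1) +
          X ^ (a + d + 1) *
            (X ^ (i * (i + (d + 1))) * gaussBinom b (i + (d + 1)) * gaussBinom a i) := by
      rw [show i + (d + 1) = i + 1 + d by ring]
      linear_combination X ^ (i * i + i * d + i + d + 1) * gaussBinom b (i + 1 + d) *
        X_pow_mul_gaussBinom_succ_succ a i
    have hd := ih d
    have hd' := ih (d + 1)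
    rw [sum_range_succ'] at hd
    rw [sum_range_succ', sum_congr rfl fun i _ => split i, sum_add_distrib, ← mul_sum, ← hd',
      sum_range_succ, show a + 1 + b = a + b + 1 by ring, show a + 1 + d = a + d + 1 by ring,
      gaussBinom_succ_succ, gaussBinom_of_lt (by omega : a < a + 1)]
    rw [← add_assoc]
    simp only [gaussBinom_zero_right] at hd ⊢
    linear_combination hd

noncomputable def vandSum (k n d : ℕ) : PowerSeries ℚ :=
  ∑ i ∈ range (n + 1), X ^ (i * (i + d)) * gaussBinom k i * gaussBinom n i

noncomputable def vandSumPred (k n d : ℕ) : PowerSeries ℚ :=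
  ∑ i ∈ range (n + 1), X ^ ((i + 1) * (i + 1 + d)) * gaussBinom k (i + 1) * gaussBinom n i

theorem vandSum_zero (k d : ℕ) : vandSum k 0 d = 1 := by
  simp [vandSum, gaussBinom_zero_right]

theorem vandSum_zero_right (k n : ℕ) : vandSum k n 0 = gaussBinom (k + n) n := by
  have h := gaussBinom_add_eq_sum n k 0
  simp only [add_zero] at h
  rw [add_comm, h, vandSum]
  exact sum_congr rfl fun i _ => by ring

theorem vandSum_eq_sum_range (k n d : ℕ) :
    vandSum k n d = ∑ i ∈ range (n + 1),
      X ^ ((i + 1) * (i + 1 + d)) * gaussBinom k (i + 1) * gaussBinom n (i + 1) + 1 := by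
  rw [vandSum, sum_range_succ', sum_range_succ, gaussBinom_of_lt (by omega : n < n + 1)]
  simp [gaussBinom_zero_right]

theorem vandSum_succ (k n d : ℕ) :
    vandSum k (n + 1) d = vandSum k n (d + 1) + vandSumPred k n d := by
  rw [vandSum, sum_range_succ', vandSum_eq_sum_range, vandSumPred, add_right_comm,
    ← sum_add_distrib]
  simp only [zero_mul, pow_zero, gaussBinom_zero_right, mul_one]
  congr 1
  refine sum_congr rfl fun i _ => ?_
  linear_combination X ^ ((i + 1) * (i + 1 + d)) * gaussBinom k (i + 1) *
    gaussBinom_succ_succ n i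

theorem vandSum_succ' (k n d : ℕ) :
    vandSum k (n + 1) (d + 1) = vandSum k n (d + 1) + X ^ (n + 1) * vandSumPred k n d := by
  rw [vandSum, sum_range_succ', vandSum_eq_sum_range, vandSumPred, mul_sum, add_right_comm,
    ← sum_add_distrib]
  simp only [zero_mul, pow_zero, gaussBinom_zero_right, mul_one]
  congr 1
  refine sum_congr rfl fun i _ => ?_
  linear_combination X ^ (i * i + i * d + 2 * i + d + 2) * gaussBinom k (i + 1) *
    X_pow_mul_gaussBinom_succ_succ n i

theorem vandSumPred_succ_sub (k n d : ℕ) :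
    vandSumPred k n (d + 1) - vandSumPred k n d =
      X ^ (d + 1) * (X ^ k * vandSum k n (d + 1) - vandSum k n (d + 2)) := by
  rw [vandSumPred, vandSumPred, vandSum, vandSum, mul_sum, ← sum_sub_distrib, ← sum_sub_distrib,
    mul_sum]
  refine sum_congr rfl fun i _ => ?_
  linear_combination -X ^ (i * i + i * d + i + d + 1) * gaussBinom n i *
    X_pow_mul_one_sub_mul_gaussBinom_succ k i

theorem X_pow_mul_vandSumPred_sub (k n d : ℕ) :
    X ^ ((n + 1) * (k + 1)) *
        (vandSumPred k n (d + 1) - (1 - X ^ (k + n + d + 2)) * vandSumPred k n d) =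
      X ^ (k + n + d + 2) *
        (X ^ ((n + 1) * k) * vandSum k (n + 1) (d + 1) - X ^ (n * k) * vandSum k n (d + 2)) := by
  linear_combination X ^ ((n + 1) * (k + 1)) * vandSumPred_succ_sub k n d -
    X ^ (k + n + d + 2 + (n + 1) * k) * vandSum_succ' k n d

theorem sum_range_vandSumPred_telescope (k m : ℕ) :
    ∑ n ∈ range m, X ^ ((n + 1) * (k + 1)) * vandSumPred k n (m - n) -
        (1 - X ^ (k + m + 1)) *
          ∑ n ∈ range m, X ^ ((n + 1) * (k + 1)) * vandSumPred k n (m - 1 - n) =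
      X ^ (k + m + 1) * (X ^ (m * k) * vandSum k m 1 - 1) := by
  have telescope : ∀ n ∈ range m, X ^ ((n + 1) * (k + 1)) * vandSumPred k n (m - n) -
      (1 - X ^ (k + m + 1)) * (X ^ ((n + 1) * (k + 1)) * vandSumPred k n (m - 1 - n)) =
      X ^ (k + m + 1) * (X ^ ((n + 1) * k) * vandSum k (n + 1) (m + 1 - (n + 1)) -
        X ^ (n * k) * vandSum k n (m + 1 - n)) := fun n hn => by
    obtain ⟨d, rfl⟩ := Nat.exists_eq_add_of_lt (mem_range.1 hn)
    rw [show n + d + 1 - n = d + 1 by omega, show n + d + 1 - 1 - n = d by omega,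
      show n + d + 1 + 1 - (n + 1) = d + 1 by omega, show n + d + 1 + 1 - n = d + 2 by omega,
      show k + (n + d + 1) + 1 = k + n + d + 2 by ring]
    linear_combination X_pow_mul_vandSumPred_sub k n d
  rw [mul_sum, ← sum_sub_distrib, sum_congr rfl telescope, ← mul_sum,
    sum_range_sub (fun n => X ^ (n * k) * vandSum k n (m + 1 - n)), vandSum_zero]
  simp

theorem A_eq_one_add_sum (k l : ℕ) :
    A k l = 1 + ∑ n ∈ range l, X ^ ((n + 1) * (k + 1)) * vandSumPred k n (l - 1 - n) := by
  set g : ℕ → ℕ → PowerSeries ℚ := fun i j =>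
    X ^ ((1 + i) * (k + l + 1)) * gaussBinom k (1 + i) *
      (X ^ (j * (k - (1 + i) + 1)) * gaussBinom (1 + i + j - 1) j)
  have summand {i n : ℕ} (hi : i ≤ n) (hn : n < l) : g i (n - i) =
      X ^ ((n + 1) * (k + 1)) * (X ^ ((i + 1) * (i + 1 + (l - 1 - n))) * gaussBinom k (i + 1) *
        gaussBinom n i) := by
    obtain ⟨j, rfl⟩ := Nat.exists_eq_add_of_le hi
    obtain ⟨r, rfl⟩ := Nat.exists_eq_add_of_lt hn
    dsimp only [g]
    rw [show 1 + i + (i + j - i) - 1 = i + j by omega, show i + j - i = j by omega,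
      gaussBinom_symm (add_comm i j), show i + j + r + 1 - 1 - (i + j) = r by omega,
      add_comm 1 i]
    -- for `k < i + 1` both sides vanish, so the truncated `k - (1 + i)` is harmless
    rcases lt_or_ge k (i + 1) with hk | hk
    · simp [gaussBinom_of_lt hk]
    · obtain ⟨e, rfl⟩ := Nat.exists_eq_add_of_le hk
      rw [show i + 1 + e - (i + 1) + 1 = e + 1 by omega]
      ring
  rw [A]
  congr 1
  calc ∑ i ∈ Icc 1 l, _
      = ∑ i ∈ range l, ∑ j ∈ range (l - i), g i j := by
        rw [← Ico_add_one_right_eq_Icc, sum_Ico_eq_sum_range, add_tsub_cancel_right]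
        refine sum_congr rfl fun i hi => ?_
        rw [mul_sum, show l - (1 + i) + 1 = l - i by have := mem_range.1 hi; omega]
    _ = ∑ n ∈ range l, ∑ i ∈ range (n + 1), g i (n - i) := (sum_range_diag_flip l g).symm
    _ = _ := sum_congr rfl fun n hn => by
        rw [vandSumPred, mul_sum]
        exact sum_congr rfl fun i hi =>
          summand (Nat.lt_succ_iff.1 (mem_range.1 hi)) (mem_range.1 hn)

theorem stmt7 (k : ℕ) :
    A k 0 = 1 ∧
    ∀ l : ℕ, 1 ≤ l →
      A k l = (1 - (PowerSeries.X : PowerSeries ℚ) ^ (k + l)) * A k (l - 1)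
        + (PowerSeries.X : PowerSeries ℚ) ^ (l * (k + 1)) * gaussBinom (k + l) l := by
  refine ⟨by simp [A], fun l hl => ?_⟩
  obtain ⟨m, rfl⟩ := Nat.exists_eq_add_of_le' hl
  have htel := sum_range_vandSumPred_telescope k m
  rw [A_eq_one_add_sum, A_eq_one_add_sum, sum_range_succ, ← vandSum_zero_right, vandSum_succ,
    Nat.add_sub_cancel, Nat.sub_self]
  linear_combination htel
end
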